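/- Let λ be a singular cardinal and let S ⊆ λ⁺ be stationary. If the ideal I[S;λ] contains a stationary subset of λ⁺, then ♣⁻_S holds. -/

import Mathlib

/-!
The sets `{β < α | d β α ≤ i}` for `i < cf λ` witness `♣⁻_S`; normality of `d` makes them small.
Given a cofinal `Z` and a club `D`, pick `γ ∈ T` in the club attached to `T` that is a limit of
both `D` and `Z`.

If `cf γ > cf λ`, let `S_γ` be the stationary set on which `d` is bounded by `i*`, and for
`z ∈ Z ∩ γ` let `z⁺` be the next point of `S_γ`. By pigeonhole there is `j < cf λ` such that the
`z` with `d z z⁺ ≤ j` are unbounded in `γ`; at a point `α ∈ S_γ ∩ D` that is a limit of these `z`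
and of `S_γ`, subadditivity gives `d z α ≤ max j i*`.

If `cf γ ≤ cf λ`, stationarity of `S ∩ γ` gives `α ∈ S ∩ D`, a limit of `Z`, that is also a limit
of a fundamental sequence of `γ`, so `α` has a cofinal subset of size `< cf λ`. Choosing a point of
`Z` above each of its elements, the values `d z α` are then bounded below `cf λ`.
-/

noncomputable section

namespace DiamondSurvey

open Cardinal

/-- `λ⁺`, the successor cardinal of `lam`, identified with its initial ordinal. -/
def succOrd (lam : Cardinal.{0}) : Ordinal.{0} :=
  (Order.succ lam).ord

/-- `λ⁺⁺`, identified with its initial ordinal. -/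
def succ2Ord (lam : Cardinal.{0}) : Ordinal.{0} :=
  (Order.succ (Order.succ lam)).ord

/-- `C` is a club in `κ`: a subset of `κ` that is unbounded in `κ` and closed under
suprema of its nonempty bounded subsets. -/
def IsClubIn (C : Set Ordinal.{0}) (κ : Ordinal.{0}) : Prop :=
  C ⊆ Set.Iio κ ∧ (∀ α < κ, ∃ β ∈ C, α ≤ β) ∧
    ∀ s ⊆ C, s.Nonempty → sSup s < κ → sSup s ∈ C

/-- `S` is stationary in `κ`: it meets every club in `κ`. -/
def IsStationaryIn (S : Set Ordinal.{0}) (κ : Ordinal.{0}) : Prop :=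
  ∀ C, IsClubIn C κ → (S ∩ C).Nonempty

/-- the cofinality of a cardinal -/
def cofC (lam : Cardinal.{0}) : Cardinal.{0} := lam.ord.cof

/-- `E^{λ⁺}_σ = {α < λ⁺ : cf(α) = σ}` -/
def Eeq (lam σ : Cardinal.{0}) : Set Ordinal.{0} :=
  {α | α < succOrd lam ∧ α.cof = σ}

/-- `E^{λ⁺}_{≠ cf(λ)} = {α < λ⁺ : α limit, cf(α) ≠ cf(λ)}` -/
def Ene (lam : Cardinal.{0}) : Set Ordinal.{0} :=
  {α | α < succOrd lam ∧ Order.IsSuccLimit α ∧ α.cof ≠ cofC lam}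

/-- `E^{λ⁺}_{< λ} = {α < λ⁺ : α limit, cf(α) < λ}` -/
def Elt (lam : Cardinal.{0}) : Set Ordinal.{0} :=
  {α | α < succOrd lam ∧ Order.IsSuccLimit α ∧ α.cof < lam}

/-- `tr(S) = {γ < κ : cf(γ) > ω and S ∩ γ is stationary in γ}` -/
def tr (κ : Ordinal.{0}) (S : Set Ordinal.{0}) : Set Ordinal.{0} :=
  {γ | γ < κ ∧ Cardinal.aleph0 < γ.cof ∧ IsStationaryIn (S ∩ Set.Iio γ) γ}

/-- Jensen's diamond principle `◊_S`. -/
def Diamond (lam : Cardinal.{0}) (S : Set Ordinal.{0}) : Prop :=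
  ∃ A : Ordinal.{0} → Set Ordinal.{0},
    (∀ α ∈ S, A α ⊆ Set.Iio α) ∧
    ∀ Z : Set Ordinal.{0}, Z ⊆ Set.Iio (succOrd lam) →
      IsStationaryIn {α | α ∈ S ∧ Z ∩ Set.Iio α = A α} (succOrd lam)

/-- `◊*_S` -/
def DiamondStar (lam : Cardinal.{0}) (S : Set Ordinal.{0}) : Prop :=
  ∃ A : Ordinal.{0} → Set (Set Ordinal.{0}),
    (∀ α ∈ S, (∀ X ∈ A α, X ⊆ Set.Iio α) ∧ #(A α) ≤ Cardinal.lift.{1} lam) ∧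
    ∀ Z : Set Ordinal.{0}, Z ⊆ Set.Iio (succOrd lam) →
      ∃ C, IsClubIn C (succOrd lam) ∧
        ∀ α ∈ C ∩ S, Z ∩ Set.Iio α ∈ A α

/-- `◊⁺_S` -/
def DiamondPlus (lam : Cardinal.{0}) (S : Set Ordinal.{0}) : Prop :=
  ∃ A : Ordinal.{0} → Set (Set Ordinal.{0}),
    (∀ α ∈ S, (∀ X ∈ A α, X ⊆ Set.Iio α) ∧ #(A α) ≤ Cardinal.lift.{1} lam) ∧
    ∀ Z : Set Ordinal.{0}, Z ⊆ Set.Iio (succOrd lam) →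
      ∃ C, IsClubIn C (succOrd lam) ∧
        ∀ α ∈ C ∩ S, Z ∩ Set.Iio α ∈ A α ∧ C ∩ Set.Iio α ∈ A α

/-- `◊^{λ⁺}_{λ⁺}` -/
def DiamondTr (lam : Cardinal.{0}) : Prop :=
  ∃ A : Ordinal.{0} → Set (Set Ordinal.{0}),
    (∀ α < succOrd lam, (∀ X ∈ A α, X ⊆ Set.Iio α) ∧ #(A α) ≤ Cardinal.lift.{1} lam) ∧
    ∀ Z : Set Ordinal.{0}, Z ⊆ Set.Iio (succOrd lam) →
      ¬ IsStationaryIn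
        (tr (succOrd lam) {α | α < succOrd lam ∧ Z ∩ Set.Iio α ∉ A α}) (succOrd lam)

/-- `♣⁻_S` -/
def ClubMinus (lam : Cardinal.{0}) (S : Set Ordinal.{0}) : Prop :=
  ∃ A : Ordinal.{0} → Set (Set Ordinal.{0}),
    (∀ α ∈ S, (∀ X ∈ A α, X ⊆ Set.Iio α ∧ #X < Cardinal.lift.{1} lam) ∧
      #(A α) ≤ Cardinal.lift.{1} lam) ∧
    ∀ Z : Set Ordinal.{0}, Z ⊆ Set.Iio (succOrd lam) →
      (∀ β < succOrd lam, ∃ γ ∈ Z, β ≤ γ) →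
      IsStationaryIn {α | α ∈ S ∧ ∃ X ∈ A α, sSup (Z ∩ X) = α} (succOrd lam)

/-- the order type of a set of ordinals -/
def otp (s : Set Ordinal.{0}) : Ordinal.{1} :=
  Ordinal.type (Subrel ((· < ·) : Ordinal.{0} → Ordinal.{0} → Prop) (· ∈ s))

/-- the weak square principle `□*_λ` -/
def SquareStar (lam : Cardinal.{0}) : Prop :=
  ∃ 𝒞 : Ordinal.{0} → Set (Set Ordinal.{0}),
    ∀ α, α < succOrd lam → Order.IsSuccLimit α →
      (𝒞 α).Nonempty ∧ #(𝒞 α) ≤ Cardinal.lift.{1} lam ∧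
      (∀ C ∈ 𝒞 α, IsClubIn C α) ∧
      (α.cof < lam → ∀ C ∈ 𝒞 α, otp C < Ordinal.lift.{1} lam.ord) ∧
      (∀ C ∈ 𝒞 α, ∀ β < α, sSup (C ∩ Set.Iio β) = β → C ∩ Set.Iio β ∈ 𝒞 β)

/-- `T ∈ I[S;λ]` -/
def InIdealISL (lam : Cardinal.{0}) (S T : Set Ordinal.{0}) : Prop :=
  T ⊆ tr (succOrd lam) S ∧
  ∃ d : Ordinal.{0} → Ordinal.{0} → Ordinal.{0},
    (∀ α β, α < β → β < succOrd lam → d α β < (cofC lam).ord) ∧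
    (∀ α β γ, α < β → β < γ → γ < succOrd lam → d α γ ≤ max (d α β) (d β γ)) ∧
    (∀ i < (cofC lam).ord, ∀ β < succOrd lam,
      #{α : Ordinal.{0} | α < β ∧ d α β ≤ i} < Cardinal.lift.{1} lam) ∧
    ∃ C, IsClubIn C (succOrd lam) ∧
      ∀ γ ∈ T ∩ C, cofC lam < γ.cof →
        ∃ Sg ⊆ S ∩ Set.Iio γ, IsStationaryIn Sg γ ∧
          sSup {x : Ordinal.{0} | ∃ α ∈ Sg, ∃ β ∈ Sg, α < β ∧ x = d α β} < (cofC lam).ord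

/-- the stationary approachability property `SAP_λ` -/
def SAP (lam : Cardinal.{0}) : Prop :=
  ∀ S ⊆ Eeq lam (cofC lam), IsStationaryIn S (succOrd lam) →
    IsStationaryIn (tr (succOrd lam) S) (succOrd lam) →
    ∃ T, InIdealISL lam S T ∧ IsStationaryIn T (succOrd lam)

/-- the reflection principle `R₁(θ,κ)` -/
def R1 (θ κ : Cardinal.{0}) : Prop :=
  ∀ f : Ordinal.{0} → Ordinal.{0},
    (∀ α, α < θ.ord → Order.IsSuccLimit α → α.cof < κ → f α < κ.ord) →
    ∃ j < κ.ord,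
      IsStationaryIn
        {δ | δ < θ.ord ∧ δ.cof = κ ∧
          IsStationaryIn
            ({α | α < θ.ord ∧ Order.IsSuccLimit α ∧ α.cof < κ ∧ f α < j} ∩ Set.Iio δ) δ}
        θ.ord

/-- the weak diamond principle `Φ_S` -/
def WeakDiamond (lam : Cardinal.{0}) (S : Set Ordinal.{0}) : Prop :=
  ∀ F : (α : Ordinal.{0}) → (Set.Iio α → Bool) → Bool,
    ∃ g : Ordinal.{0} → Bool,
      ∀ f : Ordinal.{0} → Bool,
        IsStationaryIn {α | α ∈ S ∧ F α (fun β => f β.1) = g α} (succOrd lam)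

/-- `L` is a ladder system on `S` -/
def IsLadderSystem (S : Set Ordinal.{0}) (L : Ordinal.{0} → Set Ordinal.{0}) : Prop :=
  ∀ α ∈ S, L α ⊆ Set.Iio α ∧ sSup (L α) = α ∧ otp (L α) = Ordinal.lift.{1} α.cof.ord

/-- the ladder system `L` on `S` has the uniformization property -/
def HasUniformization (S : Set Ordinal.{0}) (L : Ordinal.{0} → Set Ordinal.{0}) : Prop :=
  ∀ c : Ordinal.{0} → Ordinal.{0} → Bool,
    ∃ f : Ordinal.{0} → Bool,
      ∀ α ∈ S, Order.IsSuccLimit α → sSup {β | β ∈ L α ∧ c α β ≠ f β} < α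

/-- `𝒳` is a stationary family of sets in `[λ⁺]^{<λ}` -/
def IsStationaryFamily (lam : Cardinal.{0}) (𝒳 : Set (Set Ordinal.{0})) : Prop :=
  (∀ X ∈ 𝒳, X ⊆ Set.Iio (succOrd lam) ∧ #X < Cardinal.lift.{1} lam) ∧
  ∀ f : Finset Ordinal.{0} → Ordinal.{0},
    (∀ s : Finset Ordinal.{0}, ↑s ⊆ Set.Iio (succOrd lam) → f s < succOrd lam) →
    ∃ X ∈ 𝒳, ∀ s : Finset Ordinal.{0}, ↑s ⊆ X → f s ∈ X

/-- the principle `(1)_S` -/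
def Princ1 (lam : Cardinal.{0}) (S : Set Ordinal.{0}) : Prop :=
  ∃ 𝒳 : Set (Set Ordinal.{0}), IsStationaryFamily lam 𝒳 ∧
    (∀ X ∈ 𝒳, ∀ Y ∈ 𝒳, sSup X = sSup Y → X = Y) ∧
    ∀ X ∈ 𝒳, sSup X ∈ S

/-- the principle `(λ)_S` -/
def PrincLam (lam : Cardinal.{0}) (S : Set Ordinal.{0}) : Prop :=
  ∃ 𝒳 : Set (Set Ordinal.{0}), IsStationaryFamily lam 𝒳 ∧
    (∀ β : Ordinal.{0}, #{X | X ∈ 𝒳 ∧ sSup X = β} ≤ Cardinal.lift.{1} lam) ∧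
    ∀ X ∈ 𝒳, sSup X ∈ S

/-- `NS_{λ⁺} ↾ S` is saturated -/
def Saturated (lam : Cardinal.{0}) (S : Set Ordinal.{0}) : Prop :=
  ∀ F : Ordinal.{0} → Set Ordinal.{0},
    (∀ i < succ2Ord lam, F i ⊆ S ∧ IsStationaryIn (F i) (succOrd lam)) →
    (∀ i j, i < j → j < succ2Ord lam → F i ≠ F j) →
    ∃ i j, i < j ∧ j < succ2Ord lam ∧ IsStationaryIn (F i ∩ F j) (succOrd lam)

/-- `(T, lt)` is a `λ⁺`-Souslin tree, with height function `ht`. -/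
def IsSouslinTree (lam : Cardinal.{0}) (T : Type) (lt : T → T → Prop)
    (ht : T → Ordinal.{0}) : Prop :=
  (∀ x, ¬ lt x x) ∧
  (∀ x y z, lt x y → lt y z → lt x z) ∧
  (∀ x y z, lt x z → lt y z → lt x y ∨ x = y ∨ lt y x) ∧
  (∀ x y, lt x y → ht x < ht y) ∧
  (∀ x, ∀ β < ht x, ∃! y, lt y x ∧ ht y = β) ∧
  (∀ x, ht x < succOrd lam) ∧
  (∀ α < succOrd lam, ∃ x, ht x = α) ∧
  (∀ α : Ordinal.{0}, #{x : T | ht x = α} ≤ lam) ∧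
  (∀ A : Set T, (∀ x ∈ A, ∀ y ∈ A, x = y ∨ lt x y ∨ lt y x) → #A < Order.succ lam) ∧
  (∀ A : Set T, (∀ x ∈ A, ∀ y ∈ A, x ≠ y → ¬ lt x y ∧ ¬ lt y x) → #A < Order.succ lam)

/-- the set of cardinalities of `⊇`-cofinal subfamilies of `[λ]^σ` -/
def covFamilies (lam σ : Cardinal.{0}) : Set Cardinal.{1} :=
  {c | ∃ D : Set (Set Ordinal.{0}),
    (∀ X ∈ D, X ⊆ Set.Iio lam.ord ∧ #X = Cardinal.lift.{1} σ) ∧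
    (∀ Y : Set Ordinal.{0}, Y ⊆ Set.Iio lam.ord → #Y = Cardinal.lift.{1} σ →
      ∃ X ∈ D, Y ⊆ X) ∧
    #D = c}

/-- `cf([λ]^σ, ⊇)`, the least cardinality of a `⊇`-cofinal subfamily of `[λ]^σ` -/
def covNum (lam σ : Cardinal.{0}) : Cardinal.{1} := sInf (covFamilies lam σ)

open Set Order

universe u

section CofinalBelow

variable {W W₁ W₂ : Set Ordinal.{u}} {δ κ : Ordinal.{u}}

def CofinalBelow (W : Set Ordinal.{u}) (δ : Ordinal.{u}) : Prop :=
  ∀ b < δ, ∃ x ∈ W, b < x ∧ x < δ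

theorem CofinalBelow.inter_Iio (h : CofinalBelow W δ) : CofinalBelow (W ∩ Iio δ) δ := fun b hb =>
  let ⟨x, hx, hbx, hxδ⟩ := h b hb
  ⟨x, ⟨hx, hxδ⟩, hbx, hxδ⟩

theorem sSup_eq_of_cofinalBelow (hW : W ⊆ Iio δ) (h : CofinalBelow W δ) : sSup W = δ := by
  refine le_antisymm (csSup_le' fun x hx => (hW hx).le) (le_of_forall_lt fun b hb => ?_)
  obtain ⟨x, hx, hbx, -⟩ := h b hb
  exact hbx.trans_le (le_csSup (bddAbove_Iio.mono hW) hx)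

theorem sSup_inter_Iio_lt_of_not_cofinalBelow (h : ¬ CofinalBelow W δ) : sSup (W ∩ Iio δ) < δ := by
  simp only [CofinalBelow, not_forall, not_exists, not_and, not_lt] at h
  obtain ⟨b, hb, hWb⟩ := h
  exact (csSup_le' fun x hx => not_lt.1 fun hbx => (hWb x hx.1 hbx).not_gt hx.2).trans_lt hb

theorem sSup_inter_eq_of_cofinalBelow {Z : Set Ordinal.{u}} {f : Ordinal.{u} → Ordinal.{u}}
    {i : Ordinal.{u}} (h : CofinalBelow {x ∈ Z | f x ≤ i} δ) :
    sSup (Z ∩ {β | β < δ ∧ f β ≤ i}) = δ :=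
  sSup_eq_of_cofinalBelow (fun _ hx => hx.2.1) fun b hb =>
    let ⟨x, ⟨hxZ, hxi⟩, hbx, hxδ⟩ := h b hb
    ⟨x, ⟨hxZ, hxδ, hxi⟩, hbx, hxδ⟩

theorem sSup_lt_of_mk_lt_cof (hW : W ⊆ Iio δ) (h : #W < Cardinal.lift.{u + 1} δ.cof) :
    sSup W < δ :=
  Ordinal.sSup_lt_of_lt_cof (by rwa [← Ordinal.lift_cof]) hW

def nextIn (W : Set Ordinal.{u}) (b : Ordinal.{u}) : Ordinal.{u} :=
  sInf {x ∈ W | b < x}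

theorem CofinalBelow.nextIn_spec (h : CofinalBelow W δ) {b : Ordinal.{u}} (hb : b < δ) :
    nextIn W b ∈ W ∧ b < nextIn W b ∧ nextIn W b < δ := by
  obtain ⟨x, hx, hbx, hxδ⟩ := h b hb
  have hne : {x ∈ W | b < x}.Nonempty := ⟨x, hx, hbx⟩
  have hmem : x ∈ {x ∈ W | b < x} := ⟨hx, hbx⟩
  exact ⟨(csInf_mem hne).1, (csInf_mem hne).2, (csInf_le' hmem).trans_lt hxδ⟩

def AccIn (W : Set Ordinal.{u}) (κ : Ordinal.{u}) : Set Ordinal.{u} :=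
  {δ | δ < κ ∧ 0 < δ ∧ CofinalBelow W δ}

theorem exists_accIn_inter_gt (hκ : ℵ₀ < κ.cof) (h₁ : CofinalBelow W₁ κ)
    (h₂ : CofinalBelow W₂ κ) {α : Ordinal.{u}} (hα : α < κ) :
    ∃ δ ∈ AccIn W₁ κ ∩ AccIn W₂ κ, α < δ := by
  set x : ℕ → Ordinal.{u} := fun n => (fun b => nextIn W₂ (nextIn W₁ b))^[n] α
  have hx_succ : ∀ n, x (n + 1) = nextIn W₂ (nextIn W₁ (x n)) := fun n =>
    Function.iterate_succ_apply' _ n α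
  have hxκ : ∀ n, x n < κ := by
    intro n
    induction n with
    | zero => exact hα
    | succ n ih => rw [hx_succ]; exact (h₂.nextIn_spec (h₁.nextIn_spec ih).2.2).2.2
  have hstep : ∀ n, nextIn W₁ (x n) ∈ W₁ ∧ x n < nextIn W₁ (x n) ∧ nextIn W₁ (x n) < x (n + 1) ∧
      x (n + 1) ∈ W₂ := fun n => by
    obtain ⟨hW₁, hlt₁, hκ₁⟩ := h₁.nextIn_spec (hxκ n)
    obtain ⟨hW₂, hlt₂, -⟩ := h₂.nextIn_spec hκ₁
    rw [hx_succ]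
    exact ⟨hW₁, hlt₁, hlt₂, hW₂⟩
  have hx_lt_succ : ∀ n, x n < x (n + 1) := fun n => (hstep n).2.1.trans (hstep n).2.2.1
  have hxδ : ∀ n, x n ≤ ⨆ n, x n := Ordinal.le_iSup x
  have hδκ : ⨆ n, x n < κ := Ordinal.lift_iSup_lt_of_lt_cof (by simpa using hκ) hxκ
  have hunb : ∀ b < ⨆ n, x n, ∃ n, b < x n := fun b hb => Ordinal.lt_iSup_iff.1 hb
  have hαδ : α < ⨆ n, x n := (hx_lt_succ 0).trans_le (hxδ 1)
  refine ⟨⨆ n, x n, ⟨⟨hδκ, hαδ.pos, fun b hb => ?_⟩, ⟨hδκ, hαδ.pos, fun b hb => ?_⟩⟩, hαδ⟩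
  · obtain ⟨n, hn⟩ := hunb b hb
    obtain ⟨hW₁, hlt, hlt_succ, -⟩ := hstep n
    exact ⟨_, hW₁, hn.trans hlt, hlt_succ.trans_le (hxδ (n + 1))⟩
  · obtain ⟨n, hn⟩ := hunb b hb
    exact ⟨_, (hstep n).2.2.2, hn.trans (hx_lt_succ n),
      (hx_lt_succ (n + 1)).trans_le (hxδ (n + 2))⟩

end CofinalBelow

section Club

variable {C D W P : Set Ordinal.{0}} {γ κ : Ordinal.{0}}

theorem isSuccLimit_of_aleph0_lt_cof (hκ : ℵ₀ < κ.cof) : IsSuccLimit κ :=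
  Ordinal.one_lt_cof_iff.1 (one_lt_aleph0.trans hκ)

theorem cofinalBelow_of_forall_exists_le (hκ : IsSuccLimit κ) (hW : W ⊆ Iio κ)
    (h : ∀ α < κ, ∃ β ∈ W, α ≤ β) : CofinalBelow W κ := fun b hb =>
  let ⟨x, hx, hbx⟩ := h _ (hκ.succ_lt hb)
  ⟨x, hx, (lt_succ b).trans_le hbx, hW hx⟩

theorem IsClubIn.cofinalBelow (hC : IsClubIn C κ) (hκ : IsSuccLimit κ) : CofinalBelow C κ :=
  cofinalBelow_of_forall_exists_le hκ hC.1 hC.2.1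

theorem IsClubIn.accIn_subset (hC : IsClubIn C κ) : AccIn C κ ⊆ C := by
  rintro δ ⟨hδκ, hδ, hCδ⟩
  have hsup : sSup (C ∩ Iio δ) = δ := sSup_eq_of_cofinalBelow inter_subset_right hCδ.inter_Iio
  obtain ⟨x, hx, -, hxδ⟩ := hCδ 0 hδ
  have hmem := hC.2.2 (C ∩ Iio δ) inter_subset_left ⟨x, hx, hxδ⟩ (by rwa [hsup])
  rwa [hsup] at hmem

theorem isClubIn_accIn (hκ : ℵ₀ < κ.cof) (hW : CofinalBelow W κ) : IsClubIn (AccIn W κ) κ := by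
  refine ⟨fun δ hδ => hδ.1, fun α hα => ?_, fun s hs hne hlt => ?_⟩
  · obtain ⟨δ, hδ, hαδ⟩ := exists_accIn_inter_gt hκ hW hW hα
    exact ⟨δ, hδ.1, hαδ.le⟩
  · obtain ⟨δ₀, hδ₀⟩ := hne
    have hbdd : BddAbove s := bddAbove_Iio.mono fun x hx => (hs hx).1
    refine ⟨hlt, (hs hδ₀).2.1.trans_le (le_csSup hbdd hδ₀), fun b hb => ?_⟩
    obtain ⟨δ, hδs, hbδ⟩ := (lt_csSup_iff hbdd ⟨δ₀, hδ₀⟩).1 hb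
    obtain ⟨x, hx, hbx, hxδ⟩ := (hs hδs).2.2 b hbδ
    exact ⟨x, hx, hbx, hxδ.trans_le (le_csSup hbdd hδs)⟩

theorem IsClubIn.inter (hκ : ℵ₀ < κ.cof) (hC : IsClubIn C κ) (hD : IsClubIn D κ) :
    IsClubIn (C ∩ D) κ := by
  refine ⟨fun x hx => hC.1 hx.1, fun α hα => ?_, fun s hs hne hlt =>
    ⟨hC.2.2 s (fun x hx => (hs hx).1) hne hlt, hD.2.2 s (fun x hx => (hs hx).2) hne hlt⟩⟩
  have hκlim := isSuccLimit_of_aleph0_lt_cof hκ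
  obtain ⟨δ, ⟨hδC, hδD⟩, hαδ⟩ :=
    exists_accIn_inter_gt hκ (hC.cofinalBelow hκlim) (hD.cofinalBelow hκlim) hα
  exact ⟨δ, ⟨hC.accIn_subset hδC, hD.accIn_subset hδD⟩, hαδ.le⟩

theorem IsClubIn.inter_Iio (hD : IsClubIn D κ) (hγκ : γ < κ) (hDγ : CofinalBelow D γ) :
    IsClubIn (D ∩ Iio γ) γ := by
  refine ⟨inter_subset_right, fun α hα => ?_, fun s hs hne hlt =>
    ⟨hD.2.2 s (fun x hx => (hs hx).1) hne (hlt.trans hγκ), hlt⟩⟩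
  obtain ⟨x, hx, hαx, hxγ⟩ := hDγ α hα
  exact ⟨x, ⟨hx, hxγ⟩, hαx.le⟩

theorem isClubIn_Ioo (hγ : IsSuccLimit γ) {b : Ordinal.{0}} (hb : b < γ) :
    IsClubIn (Ioo b γ) γ := by
  refine ⟨fun x hx => hx.2, fun α hα => ⟨max α (succ b), ⟨?_, ?_⟩, le_max_left _ _⟩,
    fun s hs ⟨y, hy⟩ hlt => ⟨?_, hlt⟩⟩
  · exact (lt_succ b).trans_le (le_max_right _ _)
  · exact max_lt hα (hγ.succ_lt hb)
  · exact (hs hy).1.trans_le (le_csSup (bddAbove_Iio.mono fun x hx => (hs hx).2) hy)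

theorem IsStationaryIn.cofinalBelow (hP : IsStationaryIn P γ) (hγ : IsSuccLimit γ) :
    CofinalBelow P γ := fun _ hb =>
  let ⟨x, hxP, hbx, hxγ⟩ := hP _ (isClubIn_Ioo hγ hb)
  ⟨x, hxP, hbx, hxγ⟩

end Club

section Pigeonhole

variable {U E : Set Ordinal.{u}} {δ θ : Ordinal.{u}}

theorem exists_cofinalBelow_setOf_le_of_card_lt_cof (f : Ordinal.{u} → Ordinal.{u})
    (hU : CofinalBelow U δ) (hf : ∀ x ∈ U, x < δ → f x < θ) (hθ : θ.card < δ.cof) :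
    ∃ j < θ, CofinalBelow {x ∈ U | f x ≤ j} δ := by
  by_contra! hfib
  set bound : Ordinal.{u} → Ordinal.{u} := fun j => sSup ({x ∈ U | f x ≤ j} ∩ Iio δ)
  have hbound : bound '' Iio θ ⊆ Iio δ := image_subset_iff.2 fun j hj =>
    sSup_inter_Iio_lt_of_not_cofinalBelow (hfib j hj)
  have hσ : sSup (bound '' Iio θ) < δ := sSup_lt_of_mk_lt_cof hbound <|
    mk_image_le.trans_lt (by rwa [Cardinal.mk_Iio_ordinal, Cardinal.lift_lt])
  obtain ⟨x, hxU, hσx, hxδ⟩ := hU _ hσ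
  have hfx := hf x hxU hxδ
  refine hσx.not_ge ?_
  calc x ≤ bound (f x) := le_csSup (bddAbove_Iio.mono inter_subset_right) ⟨⟨hxU, le_rfl⟩, hxδ⟩
    _ ≤ sSup (bound '' Iio θ) := le_csSup (bddAbove_Iio.mono hbound) (mem_image_of_mem _ hfx)

theorem exists_cofinalBelow_setOf_le_of_mk_lt_cof (f : Ordinal.{u} → Ordinal.{u})
    (hEδ : E ⊆ Iio δ) (hE : CofinalBelow E δ) (hEθ : #E < Cardinal.lift.{u + 1} θ.cof)
    (hU : CofinalBelow U δ) (hf : ∀ x ∈ U, x < δ → f x < θ) :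
    ∃ j < θ, CofinalBelow {x ∈ U | f x ≤ j} δ := by
  have hvals : (fun e => f (nextIn U e)) '' E ⊆ Iio θ := image_subset_iff.2 fun e he =>
    let h := hU.nextIn_spec (hEδ he)
    hf _ h.1 h.2.2
  refine ⟨_, sSup_lt_of_mk_lt_cof hvals (mk_image_le.trans_lt hEθ), fun b hb => ?_⟩
  obtain ⟨e, he, hbe, -⟩ := hE b hb
  obtain ⟨hU', he', hδ'⟩ := hU.nextIn_spec (hEδ he)
  exact ⟨nextIn U e, ⟨hU', le_csSup (bddAbove_Iio.mono hvals) (mem_image_of_mem _ he)⟩,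
    hbe.trans he', hδ'⟩

end Pigeonhole

theorem exists_cofinalBelow_forall_mk_inter_Iio_lt_cof {γ : Ordinal.{u}} (hγ : IsSuccLimit γ) :
    ∃ R ⊆ Iio γ, CofinalBelow R γ ∧
      ∀ α < γ, #(R ∩ Iio α : Set Ordinal.{u}) < Cardinal.lift.{u + 1} γ.cof := by
  obtain ⟨f, hf⟩ := Ordinal.exists_isFundamentalSeq (o := γ) rfl
  refine ⟨range fun ξ => (f ξ).1, range_subset_iff.2 fun ξ => (f ξ).2, fun b hb => ?_,
    fun α hα => ?_⟩
  · obtain ⟨_, ⟨ξ, rfl⟩, hξ⟩ := hf.isCofinal_range ⟨succ b, hγ.succ_lt hb⟩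
    exact ⟨_, ⟨ξ, rfl⟩, (lt_succ b).trans_le hξ, (f ξ).2⟩
  · obtain ⟨_, ⟨ξ₀, rfl⟩, hξ₀⟩ := hf.isCofinal_range ⟨α, hα⟩
    have hsub : (range fun ξ => (f ξ).1) ∩ Iio α ⊆ (fun ξ => (f ξ).1) '' Iio ξ₀ := by
      rintro _ ⟨⟨ξ, rfl⟩, hξα⟩
      exact ⟨ξ, hf.strictMono.lt_iff_lt.1 (hξα.trans_le hξ₀), rfl⟩
    calc #((range fun ξ => (f ξ).1) ∩ Iio α : Set Ordinal.{u})
        ≤ #(Iio ξ₀) := (Cardinal.mk_le_mk_of_subset hsub).trans mk_image_le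
      _ ≤ #(Iio ξ₀.1) := Cardinal.mk_le_of_injective (f := fun ξ => ⟨ξ.1.1, ξ.2⟩)
          fun ξ ξ' h => by simpa [Subtype.ext_iff] using h
      _ = Cardinal.lift.{u + 1} ξ₀.1.card := Cardinal.mk_Iio_ordinal _
      _ < Cardinal.lift.{u + 1} γ.cof := Cardinal.lift_lt.2 (Cardinal.lt_ord.1 ξ₀.2)

section Approach

variable {S P D Z : Set Ordinal.{0}} {γ θ : Ordinal.{0}}
  (d : Ordinal.{0} → Ordinal.{0} → Ordinal.{0})

theorem exists_mem_cofinalBelow_of_cof_le (hd : ∀ β α, β < α → α < γ → d β α < θ)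
    (hγ : ℵ₀ < γ.cof) (hγθ : γ.cof ≤ θ.cof) (hS : IsStationaryIn S γ) (hD : IsClubIn D γ)
    (hZ : CofinalBelow Z γ) : ∃ α ∈ S ∩ D, ∃ i < θ, CofinalBelow {x ∈ Z | d x α ≤ i} α := by
  obtain ⟨R, -, hR, hRsmall⟩ :=
    exists_cofinalBelow_forall_mk_inter_Iio_lt_cof (isSuccLimit_of_aleph0_lt_cof hγ)
  obtain ⟨α, hαS, hαD, hαR, hαZ⟩ :=
    hS _ (hD.inter hγ ((isClubIn_accIn hγ hR).inter hγ (isClubIn_accIn hγ hZ)))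
  have hαγ : α < γ := hαR.1
  obtain ⟨i, hi, hiZ⟩ := exists_cofinalBelow_setOf_le_of_mk_lt_cof (d · α) inter_subset_right
    hαR.2.2.inter_Iio ((hRsmall α hαγ).trans_le (Cardinal.lift_le.2 hγθ)) hαZ.2.2
    fun x _ hxα => hd x α hxα hαγ
  exact ⟨α, ⟨hαS, hαD⟩, i, hi, hiZ⟩

theorem exists_mem_cofinalBelow_of_card_lt_cof (hd : ∀ β α, β < α → α < γ → d β α < θ)
    (hsubadd : ∀ α β ε, α < β → β < ε → ε < γ → d α ε ≤ max (d α β) (d β ε))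
    (hγ : ℵ₀ < γ.cof) (hθγ : θ.card < γ.cof) (hPγ : P ⊆ Iio γ) (hP : IsStationaryIn P γ)
    (hPd : sSup {x | ∃ a ∈ P, ∃ b ∈ P, a < b ∧ x = d a b} < θ) (hD : IsClubIn D γ)
    (hZ : CofinalBelow Z γ) : ∃ α ∈ P ∩ D, ∃ i < θ, CofinalBelow {x ∈ Z | d x α ≤ i} α := by
  have hvals : {x | ∃ a ∈ P, ∃ b ∈ P, a < b ∧ x = d a b} ⊆ Iio θ := by
    rintro _ ⟨a, -, b, hb, hab, rfl⟩
    exact hd a b hab (hPγ hb)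
  have hdP : ∀ a ∈ P, ∀ b ∈ P, a < b → d a b ≤ sSup {x | ∃ a ∈ P, ∃ b ∈ P, a < b ∧ x = d a b} :=
    fun a ha b hb hab => le_csSup (bddAbove_Iio.mono hvals) ⟨a, ha, b, hb, hab, rfl⟩
  have hPcof : CofinalBelow P γ := hP.cofinalBelow (isSuccLimit_of_aleph0_lt_cof hγ)
  obtain ⟨j, hj, hB⟩ := exists_cofinalBelow_setOf_le_of_card_lt_cof (fun z => d z (nextIn P z))
    hZ (fun z _ hz => let h := hPcof.nextIn_spec hz; hd _ _ h.2.1 h.2.2) hθγ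
  obtain ⟨α, hαP, hαD, hαB, hαP'⟩ :=
    hP _ (hD.inter hγ ((isClubIn_accIn hγ hB).inter hγ (isClubIn_accIn hγ hPcof)))
  refine ⟨α, ⟨hαP, hαD⟩, _, max_lt hj hPd, fun b hb => ?_⟩
  obtain ⟨z, ⟨hzZ, hzj⟩, hbz, hzα⟩ := hαB.2.2 b hb
  obtain ⟨hpP, hzp, hpα⟩ := hαP'.2.2.nextIn_spec hzα
  refine ⟨z, ⟨hzZ, ?_⟩, hbz, hzα⟩
  calc d z α ≤ max (d z (nextIn P z)) (d (nextIn P z) α) := hsubadd _ _ _ hzp hpα (hPγ hαP)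
    _ ≤ max j _ := max_le_max hzj (hdP _ hpP _ hαP hpα)

end Approach

theorem aleph0_lt_cof_succOrd {lam : Cardinal.{0}} (hinf : ℵ₀ ≤ lam) : ℵ₀ < (succOrd lam).cof := by
  rw [succOrd, (Cardinal.isRegular_succ hinf).cof_ord]
  exact hinf.trans_lt (lt_succ lam)

theorem stmt10_general (lam : Cardinal.{0}) (hinf : Cardinal.aleph0 ≤ lam)
    (S : Set Ordinal.{0}) (hSsub : S ⊆ Set.Iio (succOrd lam))
    (h : ∃ T, InIdealISL lam S T ∧ IsStationaryIn T (succOrd lam)) :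
    ClubMinus lam S := by
  obtain ⟨T, ⟨hTtr, d, hd, hsubadd, hnorm, C, hC, hCT⟩, hT⟩ := h
  have hκ := aleph0_lt_cof_succOrd hinf
  have hκlim := isSuccLimit_of_aleph0_lt_cof hκ
  refine ⟨fun α => (fun i => {β | β < α ∧ d β α ≤ i}) '' Iio (cofC lam).ord,
    fun α hα => ⟨?_, ?_⟩, fun Z hZ hZcof D hD => ?_⟩
  · rintro _ ⟨i, hi, rfl⟩
    exact ⟨fun β hβ => hβ.1, hnorm i hi α (hSsub hα)⟩
  · refine mk_image_le.trans ?_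
    rw [Cardinal.mk_Iio_ordinal, Cardinal.card_ord, Cardinal.lift_le]
    exact Ordinal.cof_ord_le lam
  have hZκ := cofinalBelow_of_forall_exists_le hκlim hZ hZcof
  obtain ⟨γ, hγT, hγC, hγD, hγZ⟩ := hT _ (hC.inter hκ
    ((isClubIn_accIn hκ (hD.cofinalBelow hκlim)).inter hκ (isClubIn_accIn hκ hZκ)))
  obtain ⟨hγκ, hγcof, hγS⟩ := hTtr hγT
  have hdγ : ∀ β α, β < α → α < γ → d β α < (cofC lam).ord := fun β α h hα =>
    hd β α h (hα.trans hγκ)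
  have hDγ := hD.inter_Iio hγκ hγD.2.2
  obtain ⟨α, ⟨hαS, hαD, -⟩, i, hi, hαZ⟩ : ∃ α ∈ S ∩ (D ∩ Iio γ), ∃ i < (cofC lam).ord,
      CofinalBelow {x ∈ Z | d x α ≤ i} α := by
    rcases lt_or_ge (cofC lam) γ.cof with hbig | hsmall
    · obtain ⟨P, hPS, hP, hPd⟩ := hCT γ ⟨hγT, hγC⟩ hbig
      obtain ⟨α, ⟨hαP, hαD⟩, hα⟩ := exists_mem_cofinalBelow_of_card_lt_cof d hdγ
        (fun a b c hab hbc hc => hsubadd a b c hab hbc (hc.trans hγκ)) hγcof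
        (by rwa [Cardinal.card_ord]) (fun x hx => (hPS hx).2) hP hPd hDγ hγZ.2.2
      exact ⟨α, ⟨(hPS hαP).1, hαD⟩, hα⟩
    · obtain ⟨α, ⟨hαS, hαD⟩, hα⟩ := exists_mem_cofinalBelow_of_cof_le d hdγ hγcof
        (by rwa [cofC, Ordinal.cof_ord_cof]) hγS hDγ hγZ.2.2
      exact ⟨α, ⟨hαS.1, hαD⟩, hα⟩
  exact ⟨α, ⟨hαS, _, ⟨i, hi, rfl⟩, sSup_inter_eq_of_cofinalBelow hαZ⟩, hαD⟩

theorem stmt10 (lam : Cardinal.{0}) (hinf : Cardinal.aleph0 ≤ lam)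
    (hsing : cofC lam < lam)
    (S : Set Ordinal.{0}) (hSsub : S ⊆ Set.Iio (succOrd lam))
    (hstat : IsStationaryIn S (succOrd lam))
    (h : ∃ T, InIdealISL lam S T ∧ IsStationaryIn T (succOrd lam)) :
    ClubMinus lam S :=
  stmt10_general lam hinf S hSsub h

end DiamondSurvey
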